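/- arXiv:1111.3449 — 2 statements merged into one kernel-verified Lean document; each statement's English description precedes it below -/
import Mathlib

section
/- Composition of partial unfoldings is a partial unfolding: if C is a partial unfolding of B with index sets E_1,...,E_n and D is a partial unfolding of C with index sets F_1,...,F_m (m = Σ|E_i|), then D is a partial unfolding of B with index sets G_i = ⋃_{ĵ ∈ E_i} F_ĵ, where the composite mutations satisfy μ̂̂_i = ∏_{ĵ∈E_i} μ̂_ĵ. -/
/-- Matrix mutation in direction `k` for an integer matrix. -/
def mutate {m : ℕ} (C : Matrix (Fin m) (Fin m) ℤ) (k : Fin m) : Matrix (Fin m) (Fin m) ℤ :=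
  fun i j => if i = k ∨ j = k then -C i j
    else C i j + (|C i k| * C k j + C i k * |C k j|) / 2

/-- Composite mutation of `C` in direction `k`: the product of the mutations `μ_r` over all
indices `r` in the block `E_k = π⁻¹(k)`. -/
def compMut {m n : ℕ} (π : Fin m → Fin n) (C : Matrix (Fin m) (Fin m) ℤ) (k : Fin n) :
    Matrix (Fin m) (Fin m) ℤ :=
  ((Finset.univ.filter (fun a => π a = k)).sort (· ≤ ·)).foldl mutate C

/-- `C` (with blocks `E_i = π⁻¹(i)`) is a partial unfolding of `B` if, after any sequence of
mutations of `B` matched with the corresponding composite mutations of `C`, (1) every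
column sum of each `E_i × E_j` block of `C` equals `b_ij`, and (2) whenever `b_ij ≥ 0` the
`E_i × E_j` block of `C` is entrywise nonnegative. -/
def IsPartialUnfolding {m n : ℕ} (π : Fin m → Fin n)
    (B : Matrix (Fin n) (Fin n) ℤ) (C : Matrix (Fin m) (Fin m) ℤ) : Prop :=
  ∀ seq : List (Fin n),
    (∀ (i : Fin n) (b : Fin m),
      ∑ a ∈ Finset.univ.filter (fun a => π a = i), (seq.foldl (compMut π) C) a b
        = (seq.foldl mutate B) i (π b)) ∧
    (∀ a b : Fin m, 0 ≤ (seq.foldl mutate B) (π a) (π b) →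
      0 ≤ (seq.foldl (compMut π) C) a b)

/-!
Skew-symmetrizability by a positive vector survives mutation, so every mutation of `B` has zero
diagonal. Since a block of `C` whose column sums vanish and whose entries are nonnegative is zero,
every mutation of `C` vanishes on the diagonal blocks `E_i × E_i`, and then every mutation of `E`
vanishes on `G_i × G_i`. Mutations in directions `r, s` with `c_rs = c_sr = 0` commute, and a zero
block stays zero under mutations in its own directions, so the mutations over `G_i` may be
reordered block by block into `∏_{ĵ ∈ E_i} μ̂_ĵ`. The column sums over `G_i` then split as sums
over the `F_ĵ`, `ĵ ∈ E_i`.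
-/

theorem Finset.sum_filter_comp_eq_sum_sum {α β γ M : Type*} [Fintype α] [Fintype β]
    [DecidableEq β] [DecidableEq γ] [AddCommMonoid M] (π : β → γ) (ρ : α → β) (i : γ)
    (f : α → M) :
    ∑ a ∈ Finset.univ.filter (fun a => (π ∘ ρ) a = i), f a
      = ∑ j ∈ Finset.univ.filter (fun j => π j = i),
          ∑ a ∈ Finset.univ.filter (fun a => ρ a = j), f a := by
  rw [← Finset.sum_fiberwise_of_maps_to (t := Finset.univ.filter fun j => π j = i) (g := ρ)
    (by simp)]
  refine Finset.sum_congr rfl fun j hj => Finset.sum_congr ?_ fun _ _ => rfl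
  ext a
  simp only [Finset.mem_filter, Finset.mem_univ, true_and] at hj ⊢
  exact ⟨And.right, fun ha => ⟨(congrArg π ha).trans hj, ha⟩⟩

section SkewSymmetrizable

variable {n : ℕ} {B : Matrix (Fin n) (Fin n) ℤ} {D : Fin n → ℤ}

def IsSkewSymmetrizer (B : Matrix (Fin n) (Fin n) ℤ) (D : Fin n → ℤ) : Prop :=
  ∀ i j, B i j * D j = -(B j i * D i)

theorem two_dvd_abs_mul_add_mul_abs (a b : ℤ) : 2 ∣ |a| * b + a * |b| := by
  rcases abs_cases a with ⟨ha, -⟩ | ⟨ha, -⟩ <;> rcases abs_cases b with ⟨hb, -⟩ | ⟨hb, -⟩ <;>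
    rw [ha, hb] <;> ring_nf <;> omega

theorem abs_mul_eq_abs_mul_of_mul_eq_neg_mul {x y u v : ℤ} (hu : 0 < u) (hv : 0 < v)
    (h : x * u = -(y * v)) : |x| * u = |y| * v := by
  simpa [abs_mul, abs_of_pos hu, abs_of_pos hv] using congrArg abs h

theorem IsSkewSymmetrizer.apply_self_eq_zero (hB : IsSkewSymmetrizer B D) {i : Fin n}
    (hi : D i ≠ 0) : B i i = 0 := by
  have h := hB i i
  exact (mul_eq_zero.1 (by linarith)).resolve_right hi

theorem mutate_isSkewSymmetrizer (hD : ∀ i, 0 < D i) (hB : IsSkewSymmetrizer B D) (k : Fin n) :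
    IsSkewSymmetrizer (mutate B k) D := by
  intro i j
  by_cases h : i = k ∨ j = k
  · simp only [mutate, if_pos h, if_pos h.symm]
    linear_combination -hB i j
  simp only [mutate, if_neg h, if_neg (mt Or.symm h)]
  obtain ⟨c, hc⟩ := two_dvd_abs_mul_add_mul_abs (B i k) (B k j)
  obtain ⟨c', hc'⟩ := two_dvd_abs_mul_add_mul_abs (B j k) (B k i)
  have habs_ik : |B i k| * D k = |B k i| * D i :=
    abs_mul_eq_abs_mul_of_mul_eq_neg_mul (hD k) (hD i) (hB i k)
  have habs_kj : |B k j| * D j = |B j k| * D k :=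
    abs_mul_eq_abs_mul_of_mul_eq_neg_mul (hD j) (hD k) (hB k j)
  have hcc' : c * D j = -(c' * D i) := by
    refine mul_left_cancel₀ (mul_ne_zero two_ne_zero (hD k).ne') ?_
    linear_combination (B k j * D j) * habs_ik + (B i k * D k) * habs_kj
      + (|B k i| * D i) * hB k j + (|B j k| * D k) * hB i k - D j * D k * hc - D i * D k * hc'
  rw [hc, hc', Int.mul_ediv_cancel_left _ two_ne_zero, Int.mul_ediv_cancel_left _ two_ne_zero]
  linear_combination hB i j + hcc'

theorem foldl_mutate_isSkewSymmetrizer (hD : ∀ i, 0 < D i) (hB : IsSkewSymmetrizer B D)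
    (seq : List (Fin n)) : IsSkewSymmetrizer (seq.foldl mutate B) D := by
  induction seq generalizing B with
  | nil => exact hB
  | cons k seq ih => exact ih (mutate_isSkewSymmetrizer hD hB k)

end SkewSymmetrizable

section Commutation

variable {m : ℕ} {M : Matrix (Fin m) (Fin m) ℤ} {S : Set (Fin m)}

theorem mutate_apply_eq_zero_of_mem (hM : ∀ a ∈ S, ∀ b ∈ S, M a b = 0) {k : Fin m} (hk : k ∈ S) :
    ∀ a ∈ S, ∀ b ∈ S, mutate M k a b = 0 := by
  intro a ha b hb
  simp [mutate, hM a ha b hb, hM a ha k hk, hM k hk b hb]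

theorem mutate_mutate_comm {r s : Fin m} (hrs : M r s = 0) (hsr : M s r = 0) :
    mutate (mutate M r) s = mutate (mutate M s) r := by
  rcases eq_or_ne r s with rfl | hne
  · rfl
  have hne' := hne.symm
  ext i j
  simp only [mutate]
  by_cases hir : i = r <;> by_cases his : i = s <;> by_cases hjr : j = r <;>
    by_cases hjs : j = s <;> simp_all [add_right_comm]

theorem List.Perm.foldl_mutate_eq {l₁ l₂ : List (Fin m)} (hp : l₁.Perm l₂) (hl : ∀ x ∈ l₁, x ∈ S)
    (hM : ∀ a ∈ S, ∀ b ∈ S, M a b = 0) : l₁.foldl mutate M = l₂.foldl mutate M := by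
  induction hp generalizing M with
  | nil => rfl
  | cons x _ ih =>
    exact ih (fun y hy => hl y (List.mem_cons_of_mem _ hy))
      (mutate_apply_eq_zero_of_mem hM (hl x List.mem_cons_self))
  | swap x y l =>
    have hx : x ∈ S := hl x (by simp)
    have hy : y ∈ S := hl y (by simp)
    simp only [List.foldl_cons, mutate_mutate_comm (hM y hy x hx) (hM x hx y hy)]
  | trans h₁₂ _ ih₁₂ ih₂₃ =>
    exact (ih₁₂ hl hM).trans (ih₂₃ (fun y hy => hl y (h₁₂.mem_iff.2 hy)) hM)

end Commutation

section Expansion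

variable {n m p : ℕ}

def fiberList (π : Fin m → Fin n) (i : Fin n) : List (Fin m) :=
  (Finset.univ.filter (fun a => π a = i)).sort (· ≤ ·)

theorem mem_fiberList {π : Fin m → Fin n} {i : Fin n} {a : Fin m} :
    a ∈ fiberList π i ↔ π a = i := by
  simp [fiberList]

theorem nodup_fiberList (π : Fin m → Fin n) (i : Fin n) : (fiberList π i).Nodup :=
  Finset.sort_nodup _ _

def expandSeq (π : Fin m → Fin n) (seq : List (Fin n)) : List (Fin m) :=
  seq.flatMap (fiberList π)

theorem foldl_compMut (π : Fin m → Fin n) (C : Matrix (Fin m) (Fin m) ℤ) (seq : List (Fin n)) :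
    seq.foldl (compMut π) C = (expandSeq π seq).foldl mutate C :=
  List.foldl_flatMap.symm

theorem fiberList_comp_perm (π : Fin m → Fin n) (ρ : Fin p → Fin m) (i : Fin n) :
    (fiberList (π ∘ ρ) i).Perm (expandSeq ρ (fiberList π i)) := by
  have hnodup : (expandSeq ρ (fiberList π i)).Nodup :=
    List.nodup_flatMap.2 ⟨fun j _ => nodup_fiberList ρ j,
      (nodup_fiberList π i).imp fun hjk a ha ha' =>
        hjk ((mem_fiberList.1 ha).symm.trans (mem_fiberList.1 ha'))⟩
  refine (List.perm_ext_iff_of_nodup (nodup_fiberList _ i) hnodup).2 fun a => ?_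
  simp [expandSeq, mem_fiberList]

theorem compMut_comp (π : Fin m → Fin n) (ρ : Fin p → Fin m) {M : Matrix (Fin p) (Fin p) ℤ}
    {i : Fin n} (hM : ∀ a b, π (ρ a) = i → π (ρ b) = i → M a b = 0) :
    compMut (π ∘ ρ) M i = (fiberList π i).foldl (compMut ρ) M := by
  rw [foldl_compMut]
  exact (fiberList_comp_perm π ρ i).foldl_mutate_eq (S := {a | π (ρ a) = i})
    (fun _ ha => (mem_fiberList (π := π ∘ ρ)).1 ha) fun a ha b hb => hM a b ha hb

end Expansion

section PartialUnfolding

variable {n m p : ℕ}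

theorem IsPartialUnfolding.foldl_compMut_eq_zero {π : Fin m → Fin n}
    {B : Matrix (Fin n) (Fin n) ℤ} {C : Matrix (Fin m) (Fin m) ℤ} (h : IsPartialUnfolding π B C)
    (seq : List (Fin n)) {i : Fin n} {b : Fin m} (hz : (seq.foldl mutate B) i (π b) = 0)
    {a : Fin m} (ha : π a = i) : (seq.foldl (compMut π) C) a b = 0 := by
  have hsum := (h seq).1 i b
  rw [hz] at hsum
  refine (Finset.sum_eq_zero_iff_of_nonneg fun x hx => (h seq).2 x b ?_).1 hsum a (by simpa)
  rw [(Finset.mem_filter.1 hx).2, hz]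

theorem foldl_compMut_comp (π : Fin m → Fin n) (ρ : Fin p → Fin m) {E : Matrix (Fin p) (Fin p) ℤ}
    (hE : ∀ seq a b, π (ρ a) = π (ρ b) → ((expandSeq π seq).foldl (compMut ρ) E) a b = 0)
    (seq : List (Fin n)) :
    seq.foldl (compMut (π ∘ ρ)) E = (expandSeq π seq).foldl (compMut ρ) E := by
  induction seq using List.reverseRecOn with
  | nil => rfl
  | append_singleton seq i ih =>
    rw [List.foldl_append, ih, List.foldl_cons, List.foldl_nil,
      compMut_comp π ρ fun a b ha hb => hE seq a b (ha.trans hb.symm)]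
    simp [expandSeq, List.foldl_append]

end PartialUnfolding

/-- Composition of partial unfoldings is a partial unfolding (Lemma 10.3): if `C` is a
partial unfolding of the skew-symmetrizable matrix `B` with blocks `E_i = π⁻¹(i)`, and
`E` is a partial unfolding of `C` with blocks `F_ĵ = ρ⁻¹(ĵ)`, then `E` is a partial
unfolding of `B` with blocks `G_i = (π ∘ ρ)⁻¹(i) = ⋃_{ĵ ∈ E_i} F_ĵ`, and the composite
mutations compose: `μ̂̂_i = ∏_{ĵ ∈ E_i} μ̂_ĵ`. -/
theorem partial_unfolding_comp {n m p : ℕ}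
    (B : Matrix (Fin n) (Fin n) ℤ) (C : Matrix (Fin m) (Fin m) ℤ)
    (E : Matrix (Fin p) (Fin p) ℤ)
    (π : Fin m → Fin n) (ρ : Fin p → Fin m)
    (D : Fin n → ℤ) (hD : ∀ i, 0 < D i)
    (hskew : ∀ i j, B i j * D j = -(B j i * D i))
    (h₁ : IsPartialUnfolding π B C) (h₂ : IsPartialUnfolding ρ C E) :
    IsPartialUnfolding (π ∘ ρ) B E ∧
      ∀ i : Fin n,
        compMut (π ∘ ρ) E i =
          ((Finset.univ.filter (fun a => π a = i)).sort (· ≤ ·)).foldl (compMut ρ) E := by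
  have hB : ∀ (seq : List (Fin n)) i, (seq.foldl mutate B) i i = 0 := fun seq i =>
    (foldl_mutate_isSkewSymmetrizer hD hskew seq).apply_self_eq_zero (hD i).ne'
  have hC : ∀ (seq : List (Fin n)) a b, π a = π b → (seq.foldl (compMut π) C) a b = 0 :=
    fun seq a b hab => h₁.foldl_compMut_eq_zero seq (hB seq (π b)) hab
  have hE : ∀ seq a b, π (ρ a) = π (ρ b) → ((expandSeq π seq).foldl (compMut ρ) E) a b = 0 :=
    fun seq a b hab =>
      h₂.foldl_compMut_eq_zero _ (by rw [← foldl_compMut]; exact hC seq _ _ hab) rfl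
  refine ⟨fun seq => ⟨fun i b => ?_, fun a b hab => ?_⟩,
    fun i => compMut_comp π ρ fun a b ha hb => hE [] a b (ha.trans hb.symm)⟩
  · rw [foldl_compMut_comp π ρ hE, Finset.sum_filter_comp_eq_sum_sum]
    refine (Finset.sum_congr rfl fun j _ => ?_).trans ((h₁ seq).1 i (ρ b))
    rw [foldl_compMut π C]
    exact (h₂ _).1 j b
  · rw [foldl_compMut_comp π ρ hE]
    refine (h₂ _).2 a b ?_
    rw [← foldl_compMut]
    exact (h₁ seq).2 _ _ hab
end

section
/- Column-sum condition is preserved under sign-coherent composite mutation (one-step case): let B be an n×n skew-symmetrizable matrix and C an m×m matrix with index blocks E_1,...,E_n satisfying: each E_i×E_i block of C is zero; every column sum of the E_i×E_j block equals b_ij; and each E_i×E_j block has all entries of the same sign as b_ij (nonnegative if b_ij ≥ 0, nonpositive if b_ij ≤ 0). Then for any k, the matrix C' = μ̂_k(C) (composite mutation over E_k) has the property that every column sum of its E_i×E_j block equals b'_ij, where B' = μ_k(B). -/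
open Finset

def mutationCorrection (x y : ℤ) : ℤ := (|x| * y + x * |y|) / 2

@[simp]
lemma mutationCorrection_zero_left (y : ℤ) : mutationCorrection 0 y = 0 := by
  simp [mutationCorrection]

@[simp]
lemma mutationCorrection_zero_right (x : ℤ) : mutationCorrection x 0 = 0 := by
  simp [mutationCorrection]

lemma two_mul_mutationCorrection (x y : ℤ) :
    2 * mutationCorrection x y = |x| * y + x * |y| := by
  refine Int.mul_ediv_cancel' ?_
  rcases abs_choice x with hx | hx <;> rcases abs_choice y with hy | hy <;> rw [hx, hy]
  exacts [⟨x * y, by ring⟩, ⟨0, by ring⟩, ⟨0, by ring⟩, ⟨-(x * y), by ring⟩]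

lemma abs_eq_sign_mul_of_sign_coherent {p x : ℤ} (hpos : 0 ≤ p → 0 ≤ x)
    (hneg : p ≤ 0 → x ≤ 0) : |x| = p.sign * x := by
  rcases lt_trichotomy p 0 with hp | rfl | hp
  · rw [Int.sign_eq_neg_one_of_neg hp, abs_of_nonpos (hneg hp.le), neg_one_mul]
  · simp [le_antisymm (hneg le_rfl) (hpos le_rfl)]
  · rw [Int.sign_eq_one_of_pos hp, abs_of_nonneg (hpos hp.le), one_mul]

lemma sum_sum_mutationCorrection {ι κ : Type*} {A : Finset ι} {R : Finset κ}
    {x : ι → κ → ℤ} {y : κ → ℤ} {p q : ℤ}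
    (hx : ∀ a ∈ A, ∀ r ∈ R, |x a r| = p.sign * x a r)
    (hy : ∀ r ∈ R, |y r| = q.sign * y r)
    (hxsum : ∀ r ∈ R, ∑ a ∈ A, x a r = p) (hysum : ∑ r ∈ R, y r = q) :
    ∑ a ∈ A, ∑ r ∈ R, mutationCorrection (x a r) (y r) = mutationCorrection p q := by
  refine mul_left_cancel₀ (two_ne_zero (α := ℤ)) ?_
  calc 2 * ∑ a ∈ A, ∑ r ∈ R, mutationCorrection (x a r) (y r)
      = ∑ a ∈ A, ∑ r ∈ R, (p.sign + q.sign) * (x a r * y r) := by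
        rw [mul_sum]
        refine sum_congr rfl fun a ha => ?_
        rw [mul_sum]
        refine sum_congr rfl fun r hr => ?_
        rw [two_mul_mutationCorrection, hx a ha r hr, hy r hr]
        ring
    _ = (p.sign + q.sign) * ∑ r ∈ R, (∑ a ∈ A, x a r) * y r := by
        simp only [← mul_sum, sum_mul]
        rw [sum_comm]
    _ = (p.sign + q.sign) * (p * q) := by
        rw [sum_congr rfl fun r hr => by rw [hxsum r hr], ← mul_sum, hysum]
    _ = 2 * mutationCorrection p q := by
        rw [two_mul_mutationCorrection, ← Int.sign_mul_self_eq_abs, ← Int.sign_mul_self_eq_abs]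
        ring

lemma mutate_apply {m : ℕ} (C : Matrix (Fin m) (Fin m) ℤ) (k i j : Fin m) :
    mutate C k i j =
      if i = k ∨ j = k then -C i j else C i j + mutationCorrection (C i k) (C k j) :=
  rfl

lemma mutate_apply_of_ne_of_eq_zero {m : ℕ} {C : Matrix (Fin m) (Fin m) ℤ} {k i j : Fin m}
    (hi : i ≠ k) (hj : j ≠ k) (h : C i k = 0 ∨ C k j = 0) : mutate C k i j = C i j := by
  rcases h with h | h <;> simp [mutate_apply, hi, hj, h]

lemma foldl_mutate_apply {m : ℕ} {L : List (Fin m)} (hL : L.Nodup)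
    {C : Matrix (Fin m) (Fin m) ℤ} (hC : ∀ r ∈ L, ∀ s ∈ L, C r s = 0) (a b : Fin m) :
    L.foldl mutate C a b =
      if a ∈ L ∨ b ∈ L then -C a b
      else C a b + (L.map fun r => mutationCorrection (C a r) (C r b)).sum := by
  induction L generalizing C with
  | nil => simp
  | cons r L ih =>
    obtain ⟨hrL, hL⟩ := List.nodup_cons.mp hL
    have hr : ∀ s ∈ L, s ≠ r := fun s hs h => hrL (h ▸ hs)
    have hrow : ∀ s ∈ L, C r s = 0 := fun s hs => hC r (by simp) s (by simp [hs])
    have hcol : ∀ s ∈ L, C s r = 0 := fun s hs => hC s (by simp [hs]) r (by simp)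
    have hC' : ∀ s ∈ L, ∀ t ∈ L, mutate C r s t = 0 := fun s hs t ht => by
      rw [mutate_apply_of_ne_of_eq_zero (hr s hs) (hr t ht) (.inl (hcol s hs)),
        hC s (by simp [hs]) t (by simp [ht])]
    rw [List.foldl_cons, ih hL hC']
    by_cases hab : a ∈ L ∨ b ∈ L
    · have hab_fixed : mutate C r a b = C a b := by
        rcases hab with ha | hb
        · by_cases hbr : b = r
          · subst hbr; simp [mutate_apply, hcol a ha]
          · exact mutate_apply_of_ne_of_eq_zero (hr a ha) hbr (.inl (hcol a ha))
        · by_cases har : a = r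
          · subst har; simp [mutate_apply, hrow b hb]
          · exact mutate_apply_of_ne_of_eq_zero har (hr b hb) (.inr (hrow b hb))
      rw [if_pos hab, if_pos (hab.imp (List.mem_cons_of_mem r) (List.mem_cons_of_mem r)),
        hab_fixed]
    · rw [not_or] at hab
      simp only [hab, List.mem_cons, or_false, or_self, if_false, List.map_cons, List.sum_cons]
      by_cases har : a = r ∨ b = r
      · have hzero : ∀ s ∈ L, mutationCorrection (mutate C r a s) (mutate C r s b) = 0 := by
          intro s hs
          rcases har with rfl | rfl
          · simp [mutate_apply, hrow s hs]
          · simp [mutate_apply, hcol s hs]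
        rw [if_pos har, List.sum_eq_zero (by simpa using hzero), mutate_apply, if_pos har, add_zero]
      · rw [not_or] at har
        have hsame : ∀ s ∈ L, mutationCorrection (mutate C r a s) (mutate C r s b)
            = mutationCorrection (C a s) (C s b) := fun s hs => by
          rw [mutate_apply_of_ne_of_eq_zero har.1 (hr s hs) (.inr (hrow s hs)),
            mutate_apply_of_ne_of_eq_zero (hr s hs) har.2 (.inl (hcol s hs))]
        rw [if_neg (not_or.mpr har), List.map_congr_left hsame, mutate_apply,
          if_neg (not_or.mpr har), add_assoc]

lemma compMut_apply {m n : ℕ} (π : Fin m → Fin n) {C : Matrix (Fin m) (Fin m) ℤ} {k : Fin n}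
    (hC : ∀ a b, π a = k → π b = k → C a b = 0) (a b : Fin m) :
    compMut π C k a b =
      if π a = k ∨ π b = k then -C a b
      else C a b + ∑ r ∈ univ.filter (π · = k), mutationCorrection (C a r) (C r b) := by
  set L := (univ.filter (π · = k)).sort (· ≤ ·)
  have hmem : ∀ r, r ∈ L ↔ π r = k := by simp [L]
  have hblock : ∀ r ∈ L, ∀ s ∈ L, C r s = 0 := fun r hr s hs =>
    hC r s ((hmem r).1 hr) ((hmem s).1 hs)
  rw [show compMut π C k = L.foldl mutate C from rfl, foldl_mutate_apply (sort_nodup _ _) hblock,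
    ← List.sum_toFinset _ (sort_nodup _ _)]
  simp only [hmem, L, sort_toFinset]

theorem column_sums_preserved_general {n m : ℕ}
    (B : Matrix (Fin n) (Fin n) ℤ) (C : Matrix (Fin m) (Fin m) ℤ)
    (π : Fin m → Fin n)
    (hdiag : ∀ a b, π a = π b → C a b = 0)
    (hsum : ∀ (i : Fin n) (b : Fin m),
      ∑ a ∈ Finset.univ.filter (fun a => π a = i), C a b = B i (π b))
    (hpos : ∀ a b, 0 ≤ B (π a) (π b) → 0 ≤ C a b)
    (hneg : ∀ a b, B (π a) (π b) ≤ 0 → C a b ≤ 0)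
    (k : Fin n) :
    ∀ (i : Fin n) (b : Fin m),
      ∑ a ∈ Finset.univ.filter (fun a => π a = i), (compMut π C k) a b
        = (mutate B k) i (π b) := by
  intro i b
  have hcomp := compMut_apply π (fun a b ha hb => hdiag a b (ha.trans hb.symm)) (k := k)
  rw [mutate_apply, sum_congr rfl fun a ha => by rw [hcomp, (mem_filter.mp ha).2]]
  split_ifs
  · rw [sum_neg_distrib, hsum]
  · rw [sum_add_distrib, hsum]
    congr 1
    have hcoh : ∀ a r, |C a r| = (B (π a) (π r)).sign * C a r := fun a r =>
      abs_eq_sign_mul_of_sign_coherent (hpos a r) (hneg a r)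
    refine sum_sum_mutationCorrection (fun a ha r hr => ?_) (fun r hr => ?_)
      (fun r hr => ?_) (hsum k b)
    · rw [hcoh, (mem_filter.mp ha).2, (mem_filter.mp hr).2]
    · rw [hcoh, (mem_filter.mp hr).2]
    · rw [hsum, (mem_filter.mp hr).2]

/-- Column-sum condition is preserved under sign-coherent composite mutation (one-step
case): let `B` be an `n×n` skew-symmetrizable matrix and `C` an `m×m` matrix with blocks
`E_i = π⁻¹(i)` such that each diagonal block of `C` is zero, every column sum of the
`E_i × E_j` block of `C` equals `b_ij`, and each block is sign-coherent with `b_ij`.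
Then every column sum of the `E_i × E_j` block of the composite mutation `μ̂_k(C)` equals
the `(i,j)` entry of `μ_k(B)`. -/
theorem column_sums_preserved {n m : ℕ}
    (B : Matrix (Fin n) (Fin n) ℤ) (C : Matrix (Fin m) (Fin m) ℤ)
    (π : Fin m → Fin n)
    (D : Fin n → ℤ) (hD : ∀ i, 0 < D i)
    (hskew : ∀ i j, B i j * D j = -(B j i * D i))
    (hdiag : ∀ a b, π a = π b → C a b = 0)
    (hsum : ∀ (i : Fin n) (b : Fin m),
      ∑ a ∈ Finset.univ.filter (fun a => π a = i), C a b = B i (π b))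
    (hpos : ∀ a b, 0 ≤ B (π a) (π b) → 0 ≤ C a b)
    (hneg : ∀ a b, B (π a) (π b) ≤ 0 → C a b ≤ 0)
    (k : Fin n) :
    ∀ (i : Fin n) (b : Fin m),
      ∑ a ∈ Finset.univ.filter (fun a => π a = i), (compMut π C k) a b
        = (mutate B k) i (π b) :=
  column_sums_preserved_general B C π hdiag hsum hpos hneg k
end
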